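/- arXiv:1403.0322 — 3 statements merged into one kernel-verified Lean document; each statement's English description precedes it below -/
import Mathlib

section
/- Let P ⊂ ℝ² be a 1-unconditional convex body (so (x,y) ∈ P implies (±x, ±y) ∈ P) containing the origin in its interior, let P* = {(x′,y′) ∈ ℝ² : x x′ + y y′ ≤ 1 for all (x,y) ∈ P} be its planar polar body, and let R = {(x,y,z) ∈ ℝ³ : (x, √(y²+z²)) ∈ P} and R′ = {(x,y,z) ∈ ℝ³ : (x, √(y²+z²)) ∈ P*} be the bodies of revolution about the X-axis generated by P and P* respectively. Then R′ = R*. -/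
open MeasureTheory Real Set

noncomputable def dot3 (x y : ℝ × ℝ × ℝ) : ℝ :=
  x.1 * y.1 + x.2.1 * y.2.1 + x.2.2 * y.2.2

def polar3 (K : Set (ℝ × ℝ × ℝ)) : Set (ℝ × ℝ × ℝ) :=
  {x | ∀ y ∈ K, dot3 x y ≤ 1}

noncomputable def dot2 (x y : ℝ × ℝ) : ℝ := x.1 * y.1 + x.2 * y.2

def polar2 (K : Set (ℝ × ℝ)) : Set (ℝ × ℝ) :=
  {x | ∀ y ∈ K, dot2 x y ≤ 1}

/-!
Write `|v| = √(v₁² + v₂²)` for `v ∈ ℝ²`. For `(a, v) ∈ ℝ × ℝ²` and `(x, w) ∈ R`,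
Cauchy–Schwarz gives `a x + ⟪v, w⟫ ≤ a x + |v| |w|`, and equality is attained by turning `w`
(which ranges over a whole circle of radius `|w|`) into the direction of `v`. So testing
`(a, v)` against `R` amounts to testing `(a, |v|)` against the points `(x, ρ)` of `P` with
`ρ ≥ 0`; as `P` is symmetric in the second coordinate, these give the same constraints as all
of `P`.
-/

lemma mul_add_mul_le_sqrt_mul_sqrt (b c y z : ℝ) :
    b * y + c * z ≤ √(b ^ 2 + c ^ 2) * √(y ^ 2 + z ^ 2) := by
  rw [← Real.sqrt_mul (by positivity)]
  calc b * y + c * z ≤ |b * y + c * z| := le_abs_self _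
    _ = √((b * y + c * z) ^ 2) := (Real.sqrt_sq_eq_abs _).symm
    _ ≤ √((b ^ 2 + c ^ 2) * (y ^ 2 + z ^ 2)) :=
        Real.sqrt_le_sqrt (by nlinarith [sq_nonneg (b * z - c * y)])

lemma exists_sqrt_eq_and_mul_add_mul_eq (b c : ℝ) {r : ℝ} (hr : 0 ≤ r) :
    ∃ y z : ℝ, √(y ^ 2 + z ^ 2) = r ∧ b * y + c * z = √(b ^ 2 + c ^ 2) * r := by
  have hss : √(b ^ 2 + c ^ 2) ^ 2 = b ^ 2 + c ^ 2 := Real.sq_sqrt (by positivity)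
  generalize √(b ^ 2 + c ^ 2) = s at hss ⊢
  rcases eq_or_ne s 0 with rfl | hs0
  · have hb : b = 0 := by nlinarith [sq_nonneg b, sq_nonneg c]
    have hc : c = 0 := by nlinarith [sq_nonneg b, sq_nonneg c]
    exact ⟨r, 0, by simp [Real.sqrt_sq hr], by simp [hb, hc]⟩
  · refine ⟨r * b / s, r * c / s, ?_, ?_⟩
    · have : (r * b / s) ^ 2 + (r * c / s) ^ 2 = r ^ 2 := by
        field_simp
        linear_combination -r ^ 2 * hss
      rw [this, Real.sqrt_sq hr]
    · field_simp
      linear_combination -r * hss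

def revolutionBody (D : Set (ℝ × ℝ)) : Set (ℝ × ℝ × ℝ) :=
  {p | (p.1, √(p.2.1 ^ 2 + p.2.2 ^ 2)) ∈ D}

lemma revolutionBody_polar2_subset (D : Set (ℝ × ℝ)) :
    revolutionBody (polar2 D) ⊆ polar3 (revolutionBody D) := by
  rintro ⟨a, b, c⟩ h ⟨x, y, z⟩ hxyz
  have h₁ := h _ hxyz
  have h₂ := mul_add_mul_le_sqrt_mul_sqrt b c y z
  simp only [dot2, dot3] at h₁ ⊢
  linarith

lemma polar3_revolutionBody_subset {D : Set (ℝ × ℝ)} (hD : ∀ p ∈ D, (p.1, -p.2) ∈ D) :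
    polar3 (revolutionBody D) ⊆ revolutionBody (polar2 D) := by
  rintro ⟨a, b, c⟩ h ⟨x, r⟩ hxr
  have habs : (x, |r|) ∈ D := by
    rcases abs_choice r with hr | hr <;> rw [hr]
    exacts [hxr, hD _ hxr]
  obtain ⟨y, z, hyz, hdot⟩ := exists_sqrt_eq_and_mul_add_mul_eq b c (abs_nonneg r)
  have h₁ := h (x, y, z) (show (x, √(y ^ 2 + z ^ 2)) ∈ D by rwa [hyz])
  have h₂ : √(b ^ 2 + c ^ 2) * r ≤ √(b ^ 2 + c ^ 2) * |r| :=
    mul_le_mul_of_nonneg_left (le_abs_self r) (Real.sqrt_nonneg _)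
  simp only [dot2, dot3] at h₁ ⊢
  linarith

theorem revolution_of_polar_eq_polar_of_revolution_general (P : Set (ℝ × ℝ))
    (huncond : ∀ p ∈ P, ∀ ε δ : ℝ, (ε = 1 ∨ ε = -1) → (δ = 1 ∨ δ = -1) →
      (ε * p.1, δ * p.2) ∈ P)
    (R R' : Set (ℝ × ℝ × ℝ))
    (hR : R = {p : ℝ × ℝ × ℝ | ((p.1, Real.sqrt (p.2.1 ^ 2 + p.2.2 ^ 2)) : ℝ × ℝ) ∈ P})
    (hR' : R' = {p : ℝ × ℝ × ℝ |
      ((p.1, Real.sqrt (p.2.1 ^ 2 + p.2.2 ^ 2)) : ℝ × ℝ) ∈ polar2 P}) :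
    R' = polar3 R := by
  have hflip : ∀ p ∈ P, (p.1, -p.2) ∈ P := fun p hp => by
    simpa using huncond p hp 1 (-1) (.inl rfl) (.inr rfl)
  change R' = revolutionBody (polar2 P) at hR'
  change R = revolutionBody P at hR
  subst hR hR'
  exact (revolutionBody_polar2_subset P).antisymm (polar3_revolutionBody_subset hflip)

/-- If `P` is a 1-unconditional convex body in the plane with the origin in its
interior, and `R`, `R′` are the bodies of revolution about the X-axis generated by
`P` and `P*` respectively, then `R′ = R*`. -/
theorem revolution_of_polar_eq_polar_of_revolution (P : Set (ℝ × ℝ))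
    (hconv : Convex ℝ P) (hcomp : IsCompact P)
    (h0 : (0 : ℝ × ℝ) ∈ interior P)
    (huncond : ∀ p ∈ P, ∀ ε δ : ℝ, (ε = 1 ∨ ε = -1) → (δ = 1 ∨ δ = -1) →
      (ε * p.1, δ * p.2) ∈ P)
    (R R' : Set (ℝ × ℝ × ℝ))
    (hR : R = {p : ℝ × ℝ × ℝ | ((p.1, Real.sqrt (p.2.1 ^ 2 + p.2.2 ^ 2)) : ℝ × ℝ) ∈ P})
    (hR' : R' = {p : ℝ × ℝ × ℝ |
      ((p.1, Real.sqrt (p.2.1 ^ 2 + p.2.2 ^ 2)) : ℝ × ℝ) ∈ polar2 P}) :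
    R' = polar3 R :=
  revolution_of_polar_eq_polar_of_revolution_general P huncond R R' hR hR'
end

section
/- Let a > 0 and let f : [-a,a] → ℝ be a concave, even, nonnegative function with f(0) > 0. For x′ ∈ [-1/a,1/a] define f*(x′) = inf { (1 − x′·x)/f(x) : x ∈ [-a,a], f(x) > 0 }. Let D = {(x,y) ∈ ℝ² : |x| ≤ a, |y| ≤ f(x)} and D′ = {(x′,y′) ∈ ℝ² : |x′| ≤ 1/a, |y′| ≤ f*(x′)}. Then D′ = D*, the polar body of D in ℝ². -/
open MeasureTheory Real Set

/-- The region under the polar function `f*` of a concave, even, nonnegative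
function `f` is exactly the polar body of the region under `f`. -/
theorem polar_region_eq_region_of_polar_function (a : ℝ) (ha : 0 < a) (f : ℝ → ℝ)
    (hconc : ConcaveOn ℝ (Set.Icc (-a) a) f)
    (heven : ∀ x ∈ Set.Icc (-a) a, f (-x) = f x)
    (hnonneg : ∀ x ∈ Set.Icc (-a) a, 0 ≤ f x)
    (hf0 : 0 < f 0)
    (fstar : ℝ → ℝ)
    (hfstar : ∀ x' ∈ Set.Icc (-(1/a)) (1/a),
      fstar x' = sInf {r : ℝ | ∃ x ∈ Set.Icc (-a) a, 0 < f x ∧ r = (1 - x' * x) / f x})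
    (D D' : Set (ℝ × ℝ))
    (hD : D = {p : ℝ × ℝ | |p.1| ≤ a ∧ |p.2| ≤ f p.1})
    (hD' : D' = {p : ℝ × ℝ | |p.1| ≤ 1 / a ∧ |p.2| ≤ fstar p.1}) :
    D' = polar2 D := by
  have h0mem : (0:ℝ) ∈ Set.Icc (-a) a := ⟨by linarith, by linarith⟩
  subst hD hD'
  ext p
  obtain ⟨x', y'⟩ := p
  simp only [polar2, dot2, Set.mem_setOf_eq]
  constructor
  · rintro ⟨hx', hy'⟩ ⟨x, y⟩ ⟨hx, hy⟩
    simp only at hx hy ⊢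
    have hxa : x ∈ Set.Icc (-a) a := Set.mem_Icc.mpr (abs_le.mp hx)
    have hbd : ∀ z ∈ Set.Icc (-a) a, x' * z ≤ 1 := by
      intro z hz
      calc x' * z ≤ |x' * z| := le_abs_self _
        _ = |x'| * |z| := abs_mul _ _
        _ ≤ (1/a) * a := by
            apply mul_le_mul hx' (abs_le.mpr (Set.mem_Icc.mp hz)) (abs_nonneg _)
            positivity
        _ = 1 := by field_simp
    have hfx := hnonneg x hxa
    rcases eq_or_lt_of_le hfx with h0 | hpos
    · have hy0 : y = 0 := by
        have : |y| ≤ 0 := by rw [← h0] at hy; exact hy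
        exact abs_eq_zero.mp (le_antisymm this (abs_nonneg _))
      rw [hy0]
      simpa using hbd x hxa
    · have hx'mem : x' ∈ Set.Icc (-(1/a)) (1/a) := Set.mem_Icc.mpr (abs_le.mp hx')
      have hbdd : BddBelow {r : ℝ | ∃ x ∈ Set.Icc (-a) a, 0 < f x ∧ r = (1 - x' * x) / f x} := by
        refine ⟨0, ?_⟩
        rintro r ⟨z, hz, hfz, rfl⟩
        have := hbd z hz
        apply div_nonneg (by linarith) (le_of_lt hfz)
      have hle : |y'| ≤ (1 - x' * x) / f x := by
        refine le_trans hy' ?_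
        rw [hfstar x' hx'mem]
        exact csInf_le hbdd ⟨x, hxa, hpos, rfl⟩
      have h2 : |y'| * f x ≤ 1 - x' * x := (le_div_iff₀ hpos).mp hle
      have h3 : y' * y ≤ |y'| * f x := by
        calc y' * y ≤ |y' * y| := le_abs_self _
          _ = |y'| * |y| := abs_mul _ _
          _ ≤ |y'| * f x := mul_le_mul_of_nonneg_left hy (abs_nonneg _)
      linarith
  · intro h
    have hfa : 0 ≤ f a := hnonneg a ⟨by linarith, le_refl a⟩
    have hfna : 0 ≤ f (-a) := hnonneg (-a) ⟨le_refl _, by linarith⟩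
    have h1 := h (a, 0) ⟨by simp [abs_of_pos ha], by simpa using hfa⟩
    have h2 := h (-a, 0) ⟨by simp [abs_of_pos ha], by simpa using hfna⟩
    simp only at h1 h2
    have hx' : |x'| ≤ 1 / a := by
      rw [abs_le]
      constructor
      · rw [neg_le, le_div_iff₀ ha]
        nlinarith
      · rw [le_div_iff₀ ha]; nlinarith
    refine ⟨hx', ?_⟩
    rw [hfstar x' (Set.mem_Icc.mpr (abs_le.mp hx'))]
    have hne : {r : ℝ | ∃ x ∈ Set.Icc (-a) a, 0 < f x ∧ r = (1 - x' * x) / f x}.Nonempty :=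
      ⟨(1 - x' * 0) / f 0, 0, h0mem, hf0, rfl⟩
    apply le_csInf hne
    rintro r ⟨x, hx, hfx, rfl⟩
    rw [le_div_iff₀ hfx]
    have hxabs : |x| ≤ a := abs_le.mpr (Set.mem_Icc.mp hx)
    have hfxn : 0 ≤ f x := le_of_lt hfx
    by_cases hy' : 0 ≤ y'
    · have := h (x, f x) ⟨hxabs, by simpa [abs_of_nonneg hfxn]⟩
      simp only at this
      rw [abs_of_nonneg hy']
      linarith
    · have := h (x, -f x) ⟨hxabs, by simpa [abs_of_nonneg hfxn]⟩
      simp only at this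
      rw [abs_of_neg (lt_of_not_ge hy')]
      nlinarith
end

section
/- Let a > 0, let f : [-a,a] → ℝ be a concave, even, nonnegative function with f(0) > 0, and let C ⊂ {0} × ℝ² be an origin-symmetric convex body in the YOZ-plane, with C* its polar body taken within that plane. Let K = ⋃_{x ∈ [-a,a]} ( f(x)·C + x·e₁ ) and K′ = ⋃_{x′ ∈ [-1/a,1/a]} ( f*(x′)·C* + x′·e₁ ), where e₁ = (1,0,0) and f*(x′) = inf { (1 − x′·x)/f(x) : x ∈ [-a,a], f(x) > 0 }. Then K′ = K*, the polar body of K in ℝ³. -/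
open MeasureTheory Real Set

/-- For a parallel sections homothety body `K` with generating function `f` and
homothetic section `C` (an origin-symmetric convex body in the YOZ-plane), the
body `K′` built from the polar function `f*` and the planar polar body `C*`
equals the polar body of `K`. -/
theorem polar_of_parallel_sections_homothety (a : ℝ) (ha : 0 < a) (f : ℝ → ℝ)
    (hconc : ConcaveOn ℝ (Set.Icc (-a) a) f)
    (heven : ∀ x ∈ Set.Icc (-a) a, f (-x) = f x)
    (hnonneg : ∀ x ∈ Set.Icc (-a) a, 0 ≤ f x)
    (hf0 : 0 < f 0)
    (C : Set (ℝ × ℝ × ℝ))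
    (hCplane : C ⊆ {p : ℝ × ℝ × ℝ | p.1 = 0})
    (hCconv : Convex ℝ C) (hCcomp : IsCompact C)
    (hCsymm : ∀ p ∈ C, -p ∈ C)
    (hCint : ∃ r > 0, ∀ p : ℝ × ℝ × ℝ, p.1 = 0 → p.2.1 ^ 2 + p.2.2 ^ 2 ≤ r ^ 2 → p ∈ C)
    (Cstar : Set (ℝ × ℝ × ℝ))
    (hCstar : Cstar = {p : ℝ × ℝ × ℝ | p.1 = 0 ∧ ∀ q ∈ C, dot3 p q ≤ 1})
    (fstar : ℝ → ℝ)
    (hfstar : ∀ x' ∈ Set.Icc (-(1/a)) (1/a),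
      fstar x' = sInf {r : ℝ | ∃ x ∈ Set.Icc (-a) a, 0 < f x ∧ r = (1 - x' * x) / f x})
    (K K' : Set (ℝ × ℝ × ℝ))
    (hK : K = ⋃ x ∈ Set.Icc (-a) a, (fun p : ℝ × ℝ × ℝ => f x • p + (x, 0, 0)) '' C)
    (hK' : K' = ⋃ x' ∈ Set.Icc (-(1/a)) (1/a),
      (fun p : ℝ × ℝ × ℝ => fstar x' • p + (x', 0, 0)) '' Cstar) :
    K' = polar3 K := by
  subst hCstar hK hK'
  have h1a : 0 < 1 / a := by positivity
  have hzero : (0:ℝ) ∈ Set.Icc (-a) a := ⟨by linarith, le_of_lt ha⟩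
  have key : ∀ x' ∈ Set.Icc (-(1/a)) (1/a), ∀ x ∈ Set.Icc (-a) a, x' * x ≤ 1 := by
    intro x' hx' x hx
    calc x' * x ≤ |x'| * |x| := by
          calc x' * x ≤ |x' * x| := le_abs_self _
            _ = |x'| * |x| := abs_mul _ _
      _ ≤ (1/a) * a :=
          mul_le_mul (abs_le.2 ⟨hx'.1, hx'.2⟩) (abs_le.2 ⟨hx.1, hx.2⟩) (abs_nonneg _) h1a.le
      _ = 1 := by field_simp
  have hSne : ∀ x' : ℝ,
      ({r : ℝ | ∃ x ∈ Set.Icc (-a) a, 0 < f x ∧ r = (1 - x' * x) / f x}).Nonempty :=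
    fun x' => ⟨(1 - x' * 0) / f 0, 0, hzero, hf0, rfl⟩
  have hSnn : ∀ x' ∈ Set.Icc (-(1/a)) (1/a),
      ∀ r ∈ {r : ℝ | ∃ x ∈ Set.Icc (-a) a, 0 < f x ∧ r = (1 - x' * x) / f x}, (0:ℝ) ≤ r := by
    rintro x' hx' r ⟨x, hx, hfx, rfl⟩
    exact div_nonneg (by linarith [key x' hx' x hx]) hfx.le
  have hfnn : ∀ x' ∈ Set.Icc (-(1/a)) (1/a), 0 ≤ fstar x' := by
    intro x' hx'
    rw [hfstar x' hx']
    exact Real.sInf_nonneg (hSnn x' hx')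
  have hfle : ∀ x' ∈ Set.Icc (-(1/a)) (1/a), ∀ x ∈ Set.Icc (-a) a, 0 < f x →
      fstar x' * f x ≤ 1 - x' * x := by
    intro x' hx' x hx hfx
    have h1 : fstar x' ≤ (1 - x' * x) / f x := by
      rw [hfstar x' hx']
      exact csInf_le ⟨0, hSnn x' hx'⟩ ⟨x, hx, hfx, rfl⟩
    exact (le_div_iff₀ hfx).1 h1
  obtain ⟨r, hr, hdisk⟩ := hCint
  have h0C : ((0:ℝ), (0:ℝ), (0:ℝ)) ∈ C := hdisk _ rfl (by norm_num; positivity)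
  ext p
  simp only [polar3, Set.mem_setOf_eq, Set.mem_iUnion, Set.mem_image, exists_prop]
  constructor
  · rintro ⟨x', hx', q, ⟨hq0, hqC⟩, rfl⟩ y hy
    obtain ⟨x, hx, z, hz, rfl⟩ := hy
    have hz0 : z.1 = 0 := hCplane hz
    have hdq : dot3 q z ≤ 1 := hqC z hz
    have hfx : 0 ≤ f x := hnonneg x hx
    have hf' : 0 ≤ fstar x' := hfnn x' hx'
    simp only [dot3, Prod.fst_add, Prod.snd_add, Prod.smul_fst, Prod.smul_snd,
      smul_eq_mul] at hdq ⊢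
    rcases eq_or_lt_of_le hfx with hfx0 | hfx0
    · rw [hq0, hz0] at hdq ⊢
      have := key x' hx' x hx
      rw [← hfx0]
      ring_nf
      linarith
    · have h2 := hfle x' hx' x hx hfx0
      rw [hq0, hz0] at hdq ⊢
      have hd1 : q.2.1 * z.2.1 + q.2.2 * z.2.2 ≤ 1 := by linarith
      have hkey2 : fstar x' * f x * (q.2.1 * z.2.1 + q.2.2 * z.2.2) ≤ fstar x' * f x := by
        nlinarith [mul_nonneg hf' hfx0.le, hd1]
      nlinarith [h2, hkey2]
  · intro h
    have hKy : ∀ x ∈ Set.Icc (-a) a, ∀ z ∈ C,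
        p.1 * x + f x * (p.2.1 * z.2.1 + p.2.2 * z.2.2) ≤ 1 := by
      intro x hx z hz
      have hz0 : z.1 = 0 := hCplane hz
      have := h (f x • z + (x, 0, 0)) ⟨x, hx, z, hz, rfl⟩
      simp only [dot3, Prod.fst_add, Prod.snd_add, Prod.smul_fst, Prod.smul_snd,
        smul_eq_mul, hz0] at this
      nlinarith [this]
    have hx'mem : p.1 ∈ Set.Icc (-(1/a)) (1/a) := by
      have hA := hKy a ⟨by linarith, le_refl a⟩ _ h0C
      have hB := hKy (-a) ⟨le_refl (-a), by linarith⟩ _ h0C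
      simp only [mul_zero, add_zero, zero_add] at hA hB
      have hia : (1 / a) * a = 1 := by field_simp
      constructor <;> nlinarith [hA, hB, ha, hia]
    have hd : ∀ z ∈ C, p.2.1 * z.2.1 + p.2.2 * z.2.2 ≤ fstar p.1 := by
      intro z hz
      rw [hfstar p.1 hx'mem]
      apply le_csInf (hSne _)
      rintro b ⟨x, hx, hfx, rfl⟩
      rw [le_div_iff₀ hfx]
      have := hKy x hx z hz
      nlinarith
    by_cases hp2 : p.2.1 = 0 ∧ p.2.2 = 0
    · refine ⟨p.1, hx'mem, ((0:ℝ), (0:ℝ), (0:ℝ)), ⟨rfl, fun q hq => by simp [dot3]⟩, ?_⟩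
      have : p = (p.1, p.2.1, p.2.2) := rfl
      rw [this, hp2.1, hp2.2]
      simp [Prod.ext_iff]
    · set u := p.2.1 with hu
      set v := p.2.2 with hv
      have huv : 0 < u ^ 2 + v ^ 2 := by
        rcases not_and_or.1 hp2 with h' | h'
        · have : 0 < u ^ 2 := by positivity
          nlinarith [sq_nonneg v]
        · have : 0 < v ^ 2 := by positivity
          nlinarith [sq_nonneg u]
      set n := Real.sqrt (u ^ 2 + v ^ 2) with hn
      have hn2 : n ^ 2 = u ^ 2 + v ^ 2 := Real.sq_sqrt huv.le
      have hnpos : 0 < n := Real.sqrt_pos.2 huv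
      have hq0C : ((0:ℝ), r * u / n, r * v / n) ∈ C := by
        apply hdisk _ rfl
        have h3 : (r * u / n) ^ 2 + (r * v / n) ^ 2 = r ^ 2 := by
          field_simp
          nlinarith [hn2]
        exact le_of_eq h3
      have hdn : u * (r * u / n) + v * (r * v / n) = r * n := by
        field_simp
        nlinarith [hn2]
      have hfpos : 0 < fstar p.1 := by
        have := hd _ hq0C
        simp only [hdn] at this
        nlinarith
      refine ⟨p.1, hx'mem, (fstar p.1)⁻¹ • ((0:ℝ), u, v), ⟨by simp, ?_⟩, ?_⟩
      · intro z hz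
        have h1 : dot3 ((fstar p.1)⁻¹ • ((0:ℝ), u, v)) z
            = (fstar p.1)⁻¹ * (u * z.2.1 + v * z.2.2) := by
          simp [dot3]
          ring
        rw [h1]
        have h2 := mul_le_mul_of_nonneg_left (hd z hz) (inv_nonneg.2 hfpos.le)
        rwa [inv_mul_cancel₀ hfpos.ne'] at h2
      · rw [smul_smul, mul_inv_cancel₀ hfpos.ne', one_smul]
        have : p = (p.1, u, v) := rfl
        rw [this]
        simp [Prod.ext_iff]
end
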